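/- arXiv:2309.07446 — 2 statements merged into one kernel-verified Lean document; each statement's English description precedes it below -/
import Mathlib

section
/- Let d > N ≥ 1 with d - N > 1 and T = (d-N)·d^{-d/(d-N)}. Every eigenvalue λ of multiplication by ((d-N)/d)·X on ℂ[X]/(X^{d-1} - d^{-N}X^{N-1}) satisfies |λ| ≤ T, the eigenvalues of modulus T are exactly {T·e^{2πij/(d-N)} : j = 0,…,d-N-1}, and each eigenvalue of modulus T has multiplicity one. -/
/-!
Multiplication by `c • root p` on `ℂ[X]/(p)`, with `p = X ^ (N - 1) * (X ^ ν - d⁻ᴺ)`, `ν = d - N`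
and `c = ν / d`, has minimal and hence characteristic polynomial `p` with its roots scaled by `c`,
namely `X ^ (N - 1) * (X ^ ν - T ^ ν)`, since `c ^ ν * d⁻ᴺ = ν ^ ν * d⁻ᵈ = T ^ ν`. Its roots are `0`
and the `ν`-th roots of `T ^ ν`, which are simple because `X ^ ν - T ^ ν` is separable.
-/

open Polynomial

namespace minpoly

variable {K A : Type*} [Field K] [Ring A] [Algebra K A]

theorem smul_eq_scaleRoots {x : A} (hx : IsIntegral K x) {c : K} (hc : c ≠ 0) :
    minpoly K (c • x) = (minpoly K x).scaleRoots c := by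
  refine (minpoly.unique K _ ((monic_scaleRoots_iff c).mpr (minpoly.monic hx)) ?_ ?_).symm
  · rw [Algebra.smul_def]
    exact scaleRoots_aeval_eq_zero (aeval K x)
  · intro q hq hqx
    have hx' : Polynomial.aeval x (q.scaleRoots c⁻¹) = 0 := by
      rw [show x = algebraMap K A c⁻¹ * (c • x) by
        rw [Algebra.smul_def, ← mul_assoc, ← map_mul, inv_mul_cancel₀ hc, map_one, one_mul]]
      exact scaleRoots_aeval_eq_zero hqx
    rw [degree_scaleRoots, ← degree_scaleRoots q (s := c⁻¹)]
    exact minpoly.min K x ((monic_scaleRoots_iff _).mpr hq) hx'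

end minpoly

theorem Algebra.charpoly_lmul_eq_minpoly {K A : Type*} [Field K] [Ring A] [Algebra K A]
    [FiniteDimensional K A] {x : A} (hx : Module.finrank K A ≤ (minpoly K x).natDegree) :
    (Algebra.lmul K A x).charpoly = minpoly K x := by
  have hdvd : minpoly K x ∣ (Algebra.lmul K A x).charpoly := by
    rw [← minpoly.algHom_eq _ Algebra.lmul_injective x]
    exact LinearMap.minpoly_dvd_charpoly _
  refine eq_of_monic_of_dvd_of_natDegree_le (minpoly.monic (.of_finite K x))
    (LinearMap.charpoly_monic _) hdvd ?_
  rwa [LinearMap.charpoly_natDegree]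

theorem AdjoinRoot.charpoly_lmul_smul_root {K : Type*} [Field K] {p : K[X]}
    [Module.Finite K (AdjoinRoot p)] (hp : p.Monic) {c : K} (hc : c ≠ 0) :
    (Algebra.lmul K (AdjoinRoot p) (c • root p)).charpoly = p.scaleRoots c := by
  have hroot : minpoly K (root p) = p := by
    rw [minpoly_root hp.ne_zero, hp.leadingCoeff, inv_one, C_1, mul_one]
  have hmin : minpoly K (c • root p) = p.scaleRoots c := by
    rw [minpoly.smul_eq_scaleRoots (.of_finite K (root p)) hc, hroot]
  rw [← hmin]
  refine Algebra.charpoly_lmul_eq_minpoly ?_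
  rw [hmin, natDegree_scaleRoots, (powerBasis' hp).finrank, powerBasis'_dim]

theorem scaleRoots_X_pow {R : Type*} [CommRing R] (k : ℕ) (s : R) :
    (X ^ k : R[X]).scaleRoots s = X ^ k := by
  ext i
  nontriviality R
  simp only [coeff_scaleRoots, natDegree_X_pow, coeff_X_pow]
  split_ifs with h <;> simp [h]

theorem scaleRoots_X_pow_sub_C {R : Type*} [CommRing R] (n : ℕ) (a s : R) :
    (X ^ n - C a).scaleRoots s = X ^ n - C (a * s ^ n) := by
  ext i
  nontriviality R
  simp only [coeff_scaleRoots, natDegree_X_pow_sub_C, coeff_sub, coeff_X_pow, coeff_C]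
  rcases eq_or_ne i n with rfl | h <;> rcases eq_or_ne i 0 with rfl | h' <;> simp [*]

theorem isRoot_X_pow_mul_X_pow_sub_C_iff {R : Type*} [CommRing R] [IsDomain R] {k n : ℕ} {a μ : R}
    (hμ : μ ≠ 0) : (X ^ k * (X ^ n - C a)).IsRoot μ ↔ μ ^ n = a := by
  simp [IsRoot, hμ, sub_eq_zero]

theorem rootMultiplicity_X_pow_mul_X_pow_sub_C {K : Type*} [Field K] {k n : ℕ} {a μ : K}
    (hn : (n : K) ≠ 0) (ha : a ≠ 0) (hμ : μ ^ n = a) :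
    (X ^ k * (X ^ n - C a)).rootMultiplicity μ = 1 := by
  have hμ0 : μ ≠ 0 := ne_zero_pow (by rintro rfl; exact hn Nat.cast_zero) (hμ ▸ ha)
  have hsep := separable_X_pow_sub_C a hn ha
  rw [rootMultiplicity_mul (mul_ne_zero (pow_ne_zero _ X_ne_zero) hsep.ne_zero),
    rootMultiplicity_eq_zero (by simp [hμ0]), zero_add]
  refine le_antisymm (rootMultiplicity_le_one_of_separable hsep μ) ?_
  rw [Nat.one_le_iff_ne_zero, ← Nat.pos_iff_ne_zero, rootMultiplicity_pos hsep.ne_zero]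
  simp [hμ]

theorem Complex.pow_eq_pow_iff_exists_mul_exp {z μ : ℂ} (hz : z ≠ 0) {n : ℕ} (hn : n ≠ 0) :
    μ ^ n = z ^ n ↔ ∃ j < n, μ = z * exp (2 * Real.pi * I * j / n) := by
  have hζ := isPrimitiveRoot_exp n hn
  have hpow (j : ℕ) : exp (2 * Real.pi * I / n) ^ j = exp (2 * Real.pi * I * j / n) := by
    rw [← exp_nat_mul]; ring_nf
  constructor
  · intro h
    have : NeZero n := ⟨hn⟩
    obtain ⟨j, hj, hζj⟩ := hζ.eq_pow_of_pow_eq_one (ξ := μ / z)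
      (by rw [div_pow, h, div_self (pow_ne_zero _ hz)])
    exact ⟨j, hj, by rw [← hpow, hζj, mul_div_cancel₀ _ hz]⟩
  · rintro ⟨j, -, rfl⟩
    rw [← hpow, mul_pow, ← pow_mul, pow_mul', hζ.pow_eq_one, one_pow, mul_one]

theorem Complex.norm_eq_of_pow_eq_ofReal_pow {μ : ℂ} {T : ℝ} (hT : 0 ≤ T) {n : ℕ} (hn : n ≠ 0)
    (h : μ ^ n = (T : ℂ) ^ n) : ‖μ‖ = T := by
  rw [← pow_left_inj₀ (norm_nonneg μ) hT hn, ← norm_pow, h, norm_pow, norm_real,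
    Real.norm_of_nonneg hT]

section

variable {k n : ℕ} {T : ℝ} {μ : ℂ}

theorem Complex.isRoot_X_pow_mul_X_pow_sub_C_and_norm_eq_iff (hn : n ≠ 0) (hT : 0 < T) :
    (X ^ k * (X ^ n - C ((T : ℂ) ^ n))).IsRoot μ ∧ ‖μ‖ = T ↔ μ ^ n = (T : ℂ) ^ n := by
  constructor
  · rintro ⟨hroot, hμT⟩
    have hμ : μ ≠ 0 := by rintro rfl; simp [hT.ne] at hμT
    exact (isRoot_X_pow_mul_X_pow_sub_C_iff hμ).mp hroot
  · intro h
    have hμT := norm_eq_of_pow_eq_ofReal_pow hT.le hn h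
    have hμ : μ ≠ 0 := by rintro rfl; simp [hT.ne] at hμT
    exact ⟨(isRoot_X_pow_mul_X_pow_sub_C_iff hμ).mpr h, hμT⟩

theorem Complex.norm_le_of_isRoot_X_pow_mul_X_pow_sub_C (hn : n ≠ 0) (hT : 0 < T)
    (h : (X ^ k * (X ^ n - C ((T : ℂ) ^ n))).IsRoot μ) : ‖μ‖ ≤ T := by
  rcases eq_or_ne μ 0 with rfl | hμ
  · simpa using hT.le
  · exact (norm_eq_of_pow_eq_ofReal_pow hT.le hn ((isRoot_X_pow_mul_X_pow_sub_C_iff hμ).mp h)).le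

end

theorem natCast_sub_mul_rpow_neg_div_pow {N d : ℕ} (h : N < d) :
    (((d : ℝ) - N) * (d : ℝ) ^ (-(d : ℝ) / ((d : ℝ) - N))) ^ (d - N) =
      (((d : ℝ) - N) / d) ^ (d - N) * ((d : ℝ) ^ N)⁻¹ := by
  have hd : (0 : ℝ) < d := by exact_mod_cast (N.zero_le.trans_lt h)
  have hdN : (d : ℝ) - N = ((d - N : ℕ) : ℝ) := by rw [Nat.cast_sub h.le]
  have hdN0 : ((d - N : ℕ) : ℝ) ≠ 0 := by exact_mod_cast (Nat.sub_pos_of_lt h).ne'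
  have hdd : (d : ℝ) ^ d = d ^ (d - N) * d ^ N := by rw [← pow_add, Nat.sub_add_cancel h.le]
  rw [mul_pow, ← Real.rpow_natCast (_ ^ _), ← Real.rpow_mul hd.le, hdN, div_mul_cancel₀ _ hdN0,
    Real.rpow_neg hd.le, Real.rpow_natCast, hdd, div_pow, mul_inv, div_eq_mul_inv, mul_assoc]

theorem stmt14 (N d : ℕ) (hN : 1 ≤ N) (hd : N + 1 < d) :
    let p : Polynomial ℂ := X ^ (d - 1) - C (((d : ℂ) ^ N)⁻¹) * X ^ (N - 1)
    let f : Module.End ℂ (AdjoinRoot p) :=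
      LinearMap.mulLeft ℂ ((((d : ℂ) - N) / d) • AdjoinRoot.root p)
    let T : ℝ := ((d : ℝ) - N) * (d : ℝ) ^ (-(d : ℝ) / ((d : ℝ) - N))
    (∀ μ : ℂ, f.HasEigenvalue μ → ‖μ‖ ≤ T) ∧
      (∀ μ : ℂ, (f.HasEigenvalue μ ∧ ‖μ‖ = T) ↔
        ∃ j < d - N, μ = (T : ℂ) * Complex.exp (2 * Real.pi * Complex.I * j / ((d : ℂ) - N))) ∧
      ∀ μ : ℂ, f.HasEigenvalue μ → ‖μ‖ = T →
        Module.finrank ℂ (f.maxGenEigenspace μ) = 1 := by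
  intro p f T
  set n := d - N with hn
  have hn0 : n ≠ 0 := by omega
  have hdN : (d : ℂ) - N = n := by rw [hn, Nat.cast_sub (by omega)]
  have hc : ((d : ℂ) - N) / d ≠ 0 :=
    div_ne_zero (by rw [hdN]; exact_mod_cast hn0) (by norm_cast; omega)
  have hT : 0 < T := mul_pos (by rw [sub_pos]; exact_mod_cast (by omega : N < d))
    (Real.rpow_pos_of_pos (by norm_cast; omega) _)
  have hp : p = X ^ (N - 1) * (X ^ n - C ((d : ℂ) ^ N)⁻¹) := by
    rw [mul_sub, ← pow_add, show N - 1 + n = d - 1 by omega, mul_comm]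
  have hpmonic : p.Monic := hp ▸ (monic_X_pow _).mul (monic_X_pow_sub_C _ hn0)
  have := hpmonic.finite_adjoinRoot
  have hTn : (T : ℂ) ^ n = ((d : ℂ) ^ N)⁻¹ * (((d : ℂ) - N) / d) ^ n := by
    have h := natCast_sub_mul_rpow_neg_div_pow (N := N) (d := d) (by omega)
    rw [← hn] at h
    rw [← Complex.ofReal_pow, show T ^ n = _ from h]
    push_cast
    ring
  have hchar : f.charpoly = X ^ (N - 1) * (X ^ n - C ((T : ℂ) ^ n)) := by
    rw [show f = Algebra.lmul ℂ _ _ from rfl, AdjoinRoot.charpoly_lmul_smul_root hpmonic hc, hp,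
      mul_scaleRoots_of_noZeroDivisors, scaleRoots_X_pow, scaleRoots_X_pow_sub_C, hTn]
  simp only [Module.End.hasEigenvalue_iff_isRoot_charpoly, LinearMap.finrank_maxGenEigenspace_eq,
    hchar]
  refine ⟨fun μ => Complex.norm_le_of_isRoot_X_pow_mul_X_pow_sub_C hn0 hT, fun μ => ?_,
    fun μ hroot hμT => ?_⟩
  · rw [Complex.isRoot_X_pow_mul_X_pow_sub_C_and_norm_eq_iff hn0 hT,
      Complex.pow_eq_pow_iff_exists_mul_exp (by exact_mod_cast hT.ne') hn0, hdN]
  · exact rootMultiplicity_X_pow_mul_X_pow_sub_C (by exact_mod_cast hn0)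
      (pow_ne_zero _ (by exact_mod_cast hT.ne'))
      ((Complex.isRoot_X_pow_mul_X_pow_sub_C_and_norm_eq_iff hn0 hT).mp ⟨hroot, hμT⟩)
end

section
/- Let d, w_1,…,w_N be positive integers with ν = d - Σ w_j > 0, and define, for m in the narrow set Nar, the numbers ρ_{𝒩(m)} = 1/d + 1 - m/d (where 𝒩 enumerates Nar in increasing order, ρ_0 = 1) and the multiset {α_i} obtained from {1/d + k/w_j : 1≤j≤N, 0≤k≤w_j-1} by deleting (n+1)/d once for each n ∈ {0,…,d-1}\Nar. Then Σ_{h=1}^p α_h - Σ_{h=1}^q ρ_h = -ν(1/2 + 1/d) + (3-N)/2, where p and q+1 = |Nar| are the cardinalities of {α_i} and {ρ_0,…,ρ_q}. -/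
/-!
Write the sum over the non-narrow indices as the sum over all of `range d` minus the sum over
`Nar`. The set `Nar` is symmetric under `m ↦ d - m`, so `2 ∑_{m ∈ Nar} m = |Nar| d`, and this
cancels every `Nar`-dependent term; what remains are arithmetic-progression sums.
-/

open Finset

theorem sum_range_natCast_mul_two {R : Type*} [CommRing R] (n : ℕ) :
    (∑ i ∈ range n, (i : R)) * 2 = n * (n - 1) := by
  induction n with
  | zero => simp
  | succ n ih =>
    rw [sum_range_succ, add_mul, ih]
    push_cast
    ring

section Field

variable {K : Type*} [Field K] [CharZero K]

theorem sum_range_add_div_self (a : K) {w : ℕ} (hw : w ≠ 0) :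
    ∑ k ∈ range w, (a + (k : K) / w) = w * a + ((w : K) - 1) / 2 := by
  have hwK : (w : K) ≠ 0 := Nat.cast_ne_zero.mpr hw
  have hgauss : ∑ k ∈ range w, (k : K) = w * (w - 1) / 2 :=
    eq_div_of_mul_eq two_ne_zero (sum_range_natCast_mul_two w)
  rw [sum_add_distrib, sum_const, card_range, nsmul_eq_mul, ← sum_div, hgauss]
  field_simp

theorem sum_range_succ_div_self {d : ℕ} (hd : d ≠ 0) :
    ∑ n ∈ range d, ((n : K) + 1) / d = ((d : K) + 1) / 2 := by
  have hdK : (d : K) ≠ 0 := Nat.cast_ne_zero.mpr hd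
  have hgauss : ∑ n ∈ range d, (n : K) = d * (d - 1) / 2 :=
    eq_div_of_mul_eq two_ne_zero (sum_range_natCast_mul_two d)
  rw [← sum_div, sum_add_distrib, hgauss, sum_const, card_range, nsmul_eq_mul, mul_one]
  field_simp
  ring

end Field

theorem two_mul_sum_eq_card_mul_of_sub_mem {s : Finset ℕ} {d : ℕ}
    (hs : ∀ m ∈ s, m ≤ d ∧ d - m ∈ s) : 2 * ∑ m ∈ s, m = #s * d := by
  have hreflect : ∑ m ∈ s, m = ∑ m ∈ s, (d - m) :=
    sum_nbij' (d - ·) (d - ·) (fun m hm => (hs m hm).2) (fun m hm => (hs m hm).2)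
      (fun m hm => by have := (hs m hm).1; omega) (fun m hm => by have := (hs m hm).1; omega)
      (fun m hm => by have := (hs m hm).1; omega)
  have hpair : ∑ m ∈ s, m + ∑ m ∈ s, (d - m) = #s * d := by
    rw [← sum_add_distrib, ← smul_eq_mul, ← sum_const]
    exact sum_congr rfl fun m hm => by have := (hs m hm).1; omega
  omega

def narrowSet {N : ℕ} (d : ℕ) (w : Fin N → ℕ) : Finset ℕ :=
  (range d).filter fun m => 0 < m ∧ ∀ j, ¬ d ∣ w j * m

theorem sub_mem_narrowSet {N d m : ℕ} {w : Fin N → ℕ} (hm : m ∈ narrowSet d w) :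
    d - m ∈ narrowSet d w := by
  simp only [narrowSet, mem_filter, mem_range] at hm ⊢
  obtain ⟨hmd, hm0, hndvd⟩ := hm
  refine ⟨by omega, by omega, fun j hdvd => hndvd j ?_⟩
  have hsum : w j * (d - m) + w j * m = d * w j := by
    rw [← mul_add, Nat.sub_add_cancel hmd.le, mul_comm]
  exact (Nat.dvd_add_right hdvd).mp (hsum ▸ dvd_mul_right d (w j))

theorem two_mul_sum_narrowSet {N d : ℕ} (w : Fin N → ℕ) :
    2 * ∑ m ∈ narrowSet d w, (m : ℚ) = (#(narrowSet d w) : ℚ) * d := by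
  have hs : ∀ m ∈ narrowSet d w, m ≤ d ∧ d - m ∈ narrowSet d w := fun m hm =>
    ⟨(mem_range.mp (mem_filter.mp hm).1).le, sub_mem_narrowSet hm⟩
  have h := congrArg (Nat.cast : ℕ → ℚ) (two_mul_sum_eq_card_mul_of_sub_mem hs)
  push_cast at h
  exact h

theorem stmt17_general (N d : ℕ) (hd : 2 ≤ d) (w : Fin N → ℕ) (hw : ∀ j, 0 < w j) :
    let Nar := (Finset.range d).filter (fun m => 0 < m ∧ ∀ j, ¬ d ∣ w j * m)
    let nonNar := (Finset.range d).filter (fun m => ¬(0 < m ∧ ∀ j, ¬ d ∣ w j * m))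
    let sumα : ℚ := (∑ j, ∑ k ∈ Finset.range (w j), ((1 : ℚ) / d + (k : ℚ) / (w j)))
      - ∑ n ∈ nonNar, ((n : ℚ) + 1) / d
    let sumρ : ℚ := (∑ m ∈ Nar, ((1 : ℚ) / d + 1 - (m : ℚ) / d)) - 1
    sumα - sumρ
      = -(((d : ℚ) - ∑ j, (w j : ℚ)) * ((1 : ℚ) / 2 + 1 / d)) + (3 - (N : ℚ)) / 2 := by
  intro Nar nonNar sumα sumρ
  have hd0 : d ≠ 0 := by omega
  have hsplit : ∑ n ∈ nonNar, ((n : ℚ) + 1) / d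
      = ((d : ℚ) + 1) / 2 - ∑ m ∈ Nar, ((m : ℚ) + 1) / d :=
    eq_sub_of_add_eq' ((sum_filter_add_sum_filter_not _ _ _).trans (sum_range_succ_div_self hd0))
  have hinner : ∀ j, ∑ k ∈ range (w j), ((1 : ℚ) / d + (k : ℚ) / (w j))
      = w j * (1 / d) + ((w j : ℚ) - 1) / 2 := fun j =>
    sum_range_add_div_self _ (hw j).ne'
  have hNar : 2 * ∑ m ∈ Nar, (m : ℚ) = (#Nar : ℚ) * d := two_mul_sum_narrowSet w
  simp only [sumα, sumρ, sum_congr rfl fun j _ => hinner j]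
  rw [hsplit]
  simp only [sum_add_distrib, sum_sub_distrib, add_div, ← sum_div, ← sum_mul, sum_const,
    card_univ, Fintype.card_fin, nsmul_eq_mul]
  field_simp
  linear_combination (2 : ℚ) * hNar

theorem stmt17 (N d : ℕ) (hd : 2 ≤ d) (w : Fin N → ℕ) (hw : ∀ j, 0 < w j)
    (hsum : ∑ j, w j < d) :
    let Nar := (Finset.range d).filter (fun m => 0 < m ∧ ∀ j, ¬ d ∣ w j * m)
    let nonNar := (Finset.range d).filter (fun m => ¬(0 < m ∧ ∀ j, ¬ d ∣ w j * m))
    let sumα : ℚ := (∑ j, ∑ k ∈ Finset.range (w j), ((1 : ℚ) / d + (k : ℚ) / (w j)))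
      - ∑ n ∈ nonNar, ((n : ℚ) + 1) / d
    let sumρ : ℚ := (∑ m ∈ Nar, ((1 : ℚ) / d + 1 - (m : ℚ) / d)) - 1
    sumα - sumρ
      = -(((d : ℚ) - ∑ j, (w j : ℚ)) * ((1 : ℚ) / 2 + 1 / d)) + (3 - (N : ℚ)) / 2 :=
  stmt17_general N d hd w hw
end
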